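/- Let F be a pricing function with marginal-rate function G, let β>0 and K ∈ (0,1], and let h : [0,K) → ℝ be a differentiable function with h(0) = 0 and F(β(1−z), 1−h(z)) = F(β, 1) for all z ∈ [0,K). Then for every z ∈ [0,K), h'(z) = −β·G(β(1−z)/(1−h(z))); moreover h' is strictly decreasing on [0,K) (so h is strictly decreasing and strictly concave there), and h'(0) = −β·G(β). -/

import Mathlib

/-!
Differentiating `F(β(1−z), 1−h(z)) = F(β, 1)` by the chain rule (`F` is differentiable because its
partial derivatives are continuous) gives `β F_x = −h' F_y`, i.e. `h' = −β G(β(1−z)/(1−h))`.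
As `G > 0`, `h' < 0`, so `h` decreases; then the ratio `β(1−z)/(1−h(z))` decreases, and since `G`
is decreasing, `h'` decreases, which is strict concavity.
-/

open Set Filter Topology

/-- A pricing function `F` with partial derivatives `Fx`, `Fy` and marginal-rate
function `G` (with derivative `G'`), as in Assumption 1 (Pricing Formula):
(i) `F` is continuously differentiable with positive partial derivatives;
(ii) `Fx/Fy = G(x/y)` where `G` is continuously differentiable, strictly
decreasing (negative derivative), with `G → ∞` at `0⁺` and `G → 0` at `∞`;
(iii) homogeneity of level sets. -/
structure PricingFunction (F Fx Fy : ℝ → ℝ → ℝ) (G G' : ℝ → ℝ) : Prop where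
  partialX : ∀ x y : ℝ, 0 < x → 0 < y → HasDerivAt (fun t => F t y) (Fx x y) x
  partialY : ∀ x y : ℝ, 0 < x → 0 < y → HasDerivAt (fun t => F x t) (Fy x y) y
  contX : ContinuousOn (fun p : ℝ × ℝ => Fx p.1 p.2) (Ioi 0 ×ˢ Ioi 0)
  contY : ContinuousOn (fun p : ℝ × ℝ => Fy p.1 p.2) (Ioi 0 ×ˢ Ioi 0)
  posX : ∀ x y : ℝ, 0 < x → 0 < y → 0 < Fx x y
  posY : ∀ x y : ℝ, 0 < x → 0 < y → 0 < Fy x y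
  ratio : ∀ x y : ℝ, 0 < x → 0 < y → Fx x y / Fy x y = G (x / y)
  derivG : ∀ z : ℝ, 0 < z → HasDerivAt G (G' z) z
  contG' : ContinuousOn G' (Ioi 0)
  negG' : ∀ z : ℝ, 0 < z → G' z < 0
  tendstoG0 : Tendsto G (𝓝[>] (0:ℝ)) atTop
  tendstoGtop : Tendsto G atTop (𝓝 0)
  homog : ∀ x y x' y' c : ℝ, 0 < x → 0 < y → 0 < x' → 0 < y' → 0 < c →
    F x y = F x' y' → F (c * x) (c * y) = F (c * x') (c * y')

namespace PricingFunction

open ContinuousLinearMap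

variable {F Fx Fy : ℝ → ℝ → ℝ} {G G' : ℝ → ℝ}

theorem hasStrictFDerivAt (hF : PricingFunction F Fx Fy G G') {x y : ℝ} (hx : 0 < x)
    (hy : 0 < y) :
    HasStrictFDerivAt (Function.uncurry F)
      ((toSpanSingleton ℝ (Fx x y)).coprod (toSpanSingleton ℝ (Fy x y))) (x, y) := by
  have hquad : Ioi (0 : ℝ) ×ˢ Ioi (0 : ℝ) ∈ 𝓝 (x, y) :=
    (isOpen_Ioi.prod isOpen_Ioi).mem_nhds ⟨hx, hy⟩
  refine hasStrictFDerivAt_uncurry_coprod (u := (x, y)) (f := F)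
    (f₁ := fun x y => toSpanSingleton ℝ (Fx x y))
    (f₂ := fun x y => toSpanSingleton ℝ (Fy x y)) ?_ ?_ ?_ ?_
  · filter_upwards [hquad] with p hp using hF.partialX p.1 p.2 hp.1 hp.2
  · filter_upwards [hquad] with p hp using hF.partialY p.1 p.2 hp.1 hp.2
  · exact toSpanSingletonCLE.continuous.continuousAt.comp (hF.contX.continuousAt hquad)
  · exact toSpanSingletonCLE.continuous.continuousAt.comp (hF.contY.continuousAt hquad)

theorem hasDerivAt_comp (hF : PricingFunction F Fx Fy G G') {a b : ℝ → ℝ} {a' b' t : ℝ}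
    (ha : HasDerivAt a a' t) (hb : HasDerivAt b b' t) (hat : 0 < a t) (hbt : 0 < b t) :
    HasDerivAt (fun s => F (a s) (b s)) (Fx (a t) (b t) * a' + Fy (a t) (b t) * b') t := by
  have := (hF.hasStrictFDerivAt hat hbt).hasFDerivAt.comp_hasDerivAt t (ha.prodMk hb)
  simpa [Function.comp_def, mul_comm] using this

theorem levelCurve_deriv_eq (hF : PricingFunction F Fx Fy G G') {a b : ℝ → ℝ} {a' b' t c : ℝ}
    {s : Set ℝ} (ha : HasDerivAt a a' t) (hb : HasDerivAt b b' t) (hat : 0 < a t) (hbt : 0 < b t)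
    (hts : t ∈ s) (hs : UniqueDiffWithinAt ℝ s t) (hlevel : ∀ u ∈ s, F (a u) (b u) = c) :
    b' = -G (a t / b t) * a' := by
  have hzero : Fx (a t) (b t) * a' + Fy (a t) (b t) * b' = 0 :=
    hs.eq_deriv _ (hF.hasDerivAt_comp ha hb hat hbt).hasDerivWithinAt
      ((hasDerivWithinAt_const t s c).congr hlevel (hlevel t hts))
  have hFy := (hF.posY _ _ hat hbt).ne'
  rw [← hF.ratio _ _ hat hbt]
  field_simp
  linarith

theorem G_pos (hF : PricingFunction F Fx Fy G G') {u : ℝ} (hu : 0 < u) : 0 < G u := by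
  simpa [hF.ratio u 1 hu one_pos] using div_pos (hF.posX u 1 hu one_pos) (hF.posY u 1 hu one_pos)

theorem strictAntiOn_G (hF : PricingFunction F Fx Fy G G') : StrictAntiOn G (Ioi 0) :=
  strictAntiOn_of_hasDerivWithinAt_neg (convex_Ioi 0)
    (fun u hu => (hF.derivG u hu).continuousAt.continuousWithinAt)
    (fun u hu => (hF.derivG u (interior_subset hu)).hasDerivWithinAt)
    (fun u hu => hF.negG' u (interior_subset hu))

theorem deriv_eq_neg_mul_G (hF : PricingFunction F Fx Fy G G') {β K : ℝ} {h : ℝ → ℝ}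
    (hβ : 0 < β) (hK : K ≤ 1) (hdiff : ∀ z ∈ Ico (0:ℝ) K, DifferentiableAt ℝ h z)
    (hlt : ∀ z ∈ Ico (0:ℝ) K, h z < 1)
    (heq : ∀ z ∈ Ico (0:ℝ) K, F (β * (1 - z)) (1 - h z) = F β 1) {z : ℝ} (hz : z ∈ Ico 0 K) :
    deriv h z = -β * G (β * (1 - z) / (1 - h z)) := by
  have ha : HasDerivAt (fun t => β * (1 - t)) (-β) z := by
    simpa using ((hasDerivAt_id z).const_sub 1).const_mul β
  have hb : HasDerivAt (fun t => 1 - h t) (-deriv h z) z := (hdiff z hz).hasDerivAt.const_sub 1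
  have := hF.levelCurve_deriv_eq ha hb (mul_pos hβ (sub_pos.2 (hz.2.trans_le hK)))
    (sub_pos.2 (hlt z hz)) hz (uniqueDiffOn_Ico 0 K z hz) heq
  linarith

end PricingFunction

theorem strictAntiOn_mul_one_sub_div_one_sub {β K : ℝ} {h : ℝ → ℝ} (hβ : 0 < β) (hK : K ≤ 1)
    (hlt : ∀ z ∈ Ico (0:ℝ) K, h z < 1) (hh : StrictAntiOn h (Ico 0 K)) :
    StrictAntiOn (fun z => β * (1 - z) / (1 - h z)) (Ico 0 K) := by
  intro z₁ hz₁ z₂ hz₂ h12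
  refine div_lt_div₀ (by nlinarith) (by linarith [hh hz₁ hz₂ h12]) ?_ (sub_pos.2 (hlt z₁ hz₁))
  exact (mul_pos hβ (sub_pos.2 (hz₁.2.trans_le hK))).le

/-- Properties of the implicit trading curve `h`: if `h(0) = 0` and
`F(β(1−z), 1−h(z)) = F(β,1)` on `[0,K)`, then `h'(z) = −β·G(β(1−z)/(1−h(z)))`,
`h'` is strictly decreasing (so `h` is strictly decreasing and strictly concave),
and `h'(0) = −β·G(β)`. -/
theorem stmt8 (F Fx Fy : ℝ → ℝ → ℝ) (G G' : ℝ → ℝ)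
    (hF : PricingFunction F Fx Fy G G')
    (β K : ℝ) (hβ : 0 < β) (hK : K ∈ Ioc (0:ℝ) 1)
    (h : ℝ → ℝ) (hh0 : h 0 = 0)
    (hdiff : ∀ z ∈ Ico (0:ℝ) K, DifferentiableAt ℝ h z)
    (hlt : ∀ z ∈ Ico (0:ℝ) K, h z < 1)
    (heq : ∀ z ∈ Ico (0:ℝ) K, F (β * (1 - z)) (1 - h z) = F β 1) :
    (∀ z ∈ Ico (0:ℝ) K, deriv h z = -β * G (β * (1 - z) / (1 - h z))) ∧
    StrictAntiOn (deriv h) (Ico 0 K) ∧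
    StrictAntiOn h (Ico 0 K) ∧
    StrictConcaveOn ℝ (Ico 0 K) h ∧
    deriv h 0 = -β * G β := by
  obtain ⟨hK0, hK1⟩ := hK
  have hderiv := fun z (hz : z ∈ Ico 0 K) => hF.deriv_eq_neg_mul_G hβ hK1 hdiff hlt heq hz
  have hratio_pos : ∀ z ∈ Ico (0:ℝ) K, 0 < β * (1 - z) / (1 - h z) := fun z hz =>
    div_pos (mul_pos hβ (sub_pos.2 (hz.2.trans_le hK1))) (sub_pos.2 (hlt z hz))
  have hcont : ContinuousOn h (Ico 0 K) := fun z hz =>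
    (hdiff z hz).continuousAt.continuousWithinAt
  have hanti : StrictAntiOn h (Ico 0 K) := by
    refine strictAntiOn_of_deriv_neg (convex_Ico 0 K) hcont fun z hz => ?_
    rw [hderiv z (interior_subset hz)]
    exact mul_neg_of_neg_of_pos (neg_neg_of_pos hβ) (hF.G_pos (hratio_pos z (interior_subset hz)))
  have hderiv_anti : StrictAntiOn (deriv h) (Ico 0 K) := by
    have hG_ratio := hF.strictAntiOn_G.comp (strictAntiOn_mul_one_sub_div_one_sub hβ hK1 hlt hanti)
      hratio_pos
    intro z₁ hz₁ z₂ hz₂ h12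
    rw [hderiv z₁ hz₁, hderiv z₂ hz₂]
    exact mul_lt_mul_of_neg_left (hG_ratio hz₁ hz₂ h12) (neg_lt_zero.2 hβ)
  refine ⟨hderiv, hderiv_anti, hanti,
    (hderiv_anti.mono interior_subset).strictConcaveOn_of_deriv (convex_Ico 0 K) hcont, ?_⟩
  simpa [hh0] using hderiv 0 ⟨le_rfl, hK0⟩
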